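/- arXiv:1912.05769 — 3 statements merged into one kernel-verified Lean document; each statement's English description precedes it below -/
import Mathlib

section
/- Let D = ((x_1,y_1),...,(x_n,y_n)) have density ∏_{i=1}^n f(x_i,y_i) for a joint density f, and conditionally on D let a random permutation π be drawn with probability P(π | D) = ∏_i f(x_i, y_{π(i)}) / Σ_{π'} ∏_i f(x_i, y_{π'(i)}). Then the permuted sample π(D) = ((x_1,y_{π(1)}),...,(x_n,y_{π(n)})) has the same density ∏_{i=1}^n f(x_i,y_i); that is, π(D) is distributed as n i.i.d. draws from f. -/
/-- if `D` has density `∏ i f(x_i, y_i)` and, conditionally on `D`, a random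
permutation `π` is drawn with probability `∏ i f(x_i, y_{π i}) / ∑_{π'} ∏ i f(x_i, y_{π' i})`,
then the permuted sample `π(D)` again has density `∏ i f(x_i, y_i)`.  Expressed pointwise:
the density of `π(D)` at the points `(x_i, z_i)` is obtained by summing over permutations `π`
the density of `D` at `(x_i, z_{π⁻¹ i})` times the conditional probability of `π` given that
data (which equals `∏ i f(x_i, z_i) / S` with `S = ∑_{π'} ∏ i f(x_i, z_{π' i})`), and this sum
equals `∏ i f(x_i, z_i)`. -/
theorem permuted_sample_has_same_density
    {n : ℕ} (f : ℝ → ℝ → ℝ) (x z : Fin n → ℝ)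
    (hS : (∑ π' : Equiv.Perm (Fin n), ∏ i, f (x i) (z (π' i))) ≠ 0) :
    ∑ π : Equiv.Perm (Fin n),
        (∏ i, f (x i) (z (π⁻¹ i))) *
          ((∏ i, f (x i) (z i)) /
            (∑ π' : Equiv.Perm (Fin n), ∏ i, f (x i) (z (π' i))))
      = ∏ i, f (x i) (z i) := by
  rw [← Finset.sum_mul]
  have h : (∑ π : Equiv.Perm (Fin n), ∏ i, f (x i) (z (π⁻¹ i)))
      = ∑ π' : Equiv.Perm (Fin n), ∏ i, f (x i) (z (π' i)) :=
    Finset.sum_bijective (·⁻¹) (Equiv.inv _).bijective (by simp) (fun _ _ => rfl)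
  rw [h, mul_div_cancel₀ _ hS]
end

section
/- Under the truncation model with exchangeable continuous joint density, the estimator F̂_n(x) = (1/(2n))[Σ_{i=1}^n 1{X_i ≤ x} + Σ_{i=1}^n 1{Y_i ≤ x}], computed from n i.i.d. pairs drawn from the biased density 2·1{x<y}f(x,y), converges almost surely (uniformly in x) to the common unbiased marginal CDF F_X = F_Y. -/
/-!
Let `ν` be the truncated law (density `2·1{x<y} f`) and `ρ` the law with density `f`. Off the
diagonal, which is null, `2·1{x<y} f(x,y) + 2·1{y<x} f(y,x) = 2 f(x,y)`, so `ν + swap₊ν = 2ρ`: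
the two biased marginals average to the unbiased one. Hence a pair has on average `2 F(t)`
coordinates `≤ t`, and the strong law gives `F̂ₙ(t) → F(t)` almost surely at countably many `t` at
once, namely at the quantiles `F⁻¹(q)`, `q ∈ ℚ ∩ (0,1)`, which exist because `F` is a continuous
cdf. Since `F̂ₙ` and `F` are monotone with values in `[0,1]`, convergence on the grid `F⁻¹(j/k)`
forces `sup_t |F̂ₙ(t) - F(t)| ≤ ε + 1/k` eventually.
-/

open MeasureTheory ProbabilityTheory Filter Set Topology

lemma ae_prod_fst_ne_snd {α : Type*} [MeasurableSpace α] [MeasurableEq α] {μ ν : Measure α}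
    [SFinite ν] [NullSingletonClass ν] : ∀ᵐ p ∂μ.prod ν, p.1 ≠ p.2 := by
  refine measure_mono_null (fun p hp => ?_) ((Measure.measure_prod_null measurableSet_diagonal).2
    (ae_of_all _ fun x => ?_))
  · simpa using hp
  · simp [Set.preimage, Set.diagonal]

lemma map_swap_prod_withDensity {α β : Type*} [MeasurableSpace α] [MeasurableSpace β]
    {μ : Measure α} {ν : Measure β} [SFinite μ] [SFinite ν] (g : α × β → ENNReal) :
    ((μ.prod ν).withDensity g).map Prod.swap = (ν.prod μ).withDensity (g ∘ Prod.swap) := by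
  ext s hs
  rw [Measure.map_apply measurable_swap hs, withDensity_apply _ (measurable_swap hs),
    withDensity_apply _ hs]
  exact (Measure.measurePreserving_swap (μ := μ) (ν := ν)).setLIntegral_comp_preimage_emb
    MeasurableEquiv.prodComm.measurableEmbedding (g ∘ Prod.swap) s

lemma nullSingletonClass_map_fst {α β : Type*} [MeasurableSpace α] [MeasurableSpace β]
    [MeasurableSingletonClass α] {μ : Measure α} {ν : Measure β} [NullSingletonClass μ] [SFinite ν]
    {ρ : Measure (α × β)} (h : ρ ≪ μ.prod ν) : NullSingletonClass (ρ.map Prod.fst) := by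
  refine ⟨fun x => ?_⟩
  rw [Measure.map_apply measurable_fst (measurableSet_singleton x), ← Set.prod_univ]
  exact h (by simp [Measure.prod_prod])

namespace ProbabilityTheory

lemma cdf_map_fst {β : Type*} [MeasurableSpace β] (ρ : Measure (ℝ × β)) [IsProbabilityMeasure ρ]
    (t : ℝ) : cdf (ρ.map Prod.fst) t = ρ.real {p | p.1 ≤ t} := by
  have := Measure.isProbabilityMeasure_map (μ := ρ) measurable_fst.aemeasurable
  rw [cdf_eq_real, map_measureReal_apply measurable_fst measurableSet_Iic]
  rfl

theorem continuous_cdf (P : Measure ℝ) [IsProbabilityMeasure P] [NullSingletonClass P] :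
    Continuous (cdf P) := by
  refine continuous_iff_continuousAt.2 fun x => continuousAt_iff_continuous_left_right.2
    ⟨?_, (cdf P).right_continuous x⟩
  rw [continuousWithinAt_Iio_iff_Iic.symm, (monotone_cdf P).continuousWithinAt_Iio_iff_leftLim_eq]
  have h := (cdf P).measure_singleton x
  rw [measure_cdf, measure_singleton, eq_comm, ENNReal.ofReal_eq_zero, sub_nonpos] at h
  exact le_antisymm ((monotone_cdf P).leftLim_le le_rfl) h

theorem exists_cdf_eq (P : Measure ℝ) [IsProbabilityMeasure P] [NullSingletonClass P] {c : ℝ}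
    (hc : c ∈ Ioo 0 1) : ∃ t, cdf P t = c :=
  mem_range_of_exists_le_of_exists_ge (continuous_cdf P)
    (((tendsto_cdf_atBot P).eventually (gt_mem_nhds hc.1)).exists.imp fun _ => le_of_lt)
    (((tendsto_cdf_atTop P).eventually (lt_mem_nhds hc.2)).exists.imp fun _ => le_of_lt)

theorem ae_tendsto_average_comp {Ω α : Type*} [MeasurableSpace Ω] [MeasurableSpace α]
    {μ : Measure Ω} {Z : ℕ → Ω → α} (hZ : ∀ i, Measurable (Z i)) (hindep : iIndepFun Z μ)
    {ν : Measure α} (hlaw : ∀ i, μ.map (Z i) = ν) {φ : α → ℝ} (hφ : Measurable φ)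
    (hint : Integrable φ ν) :
    ∀ᵐ ω ∂μ, Tendsto (fun n : ℕ => (∑ i ∈ Finset.range n, φ (Z i ω)) / n) atTop
      (𝓝 (∫ a, φ a ∂ν)) := by
  have hident : ∀ i, IdentDistrib (Z i) (Z 0) μ μ := fun i =>
    ⟨(hZ i).aemeasurable, (hZ 0).aemeasurable, by rw [hlaw i, hlaw 0]⟩
  have hint₀ : Integrable (fun ω => φ (Z 0 ω)) μ :=
    (integrable_map_measure hφ.aestronglyMeasurable (hZ 0).aemeasurable).1 (hlaw 0 ▸ hint)
  have h := strong_law_ae_real (fun i ω => φ (Z i ω)) hint₀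
    (fun i j hij => (hindep.indepFun hij).comp hφ hφ) fun i => (hident i).comp hφ
  rwa [← integral_map (hZ 0).aemeasurable hφ.aestronglyMeasurable, hlaw 0] at h

end ProbabilityTheory

section GlivenkoCantelli

variable {S F : ℝ → ℝ}

lemma abs_sub_le_of_bracket (hS : Monotone S) (hF : Monotone F) {a b t ε : ℝ} (hat : a ≤ t)
    (htb : t ≤ b) (h₁ : S b ≤ F a + ε) (h₂ : F b ≤ S a + ε) : |S t - F t| ≤ ε :=
  abs_sub_le_iff.2 ⟨by linarith [hS htb, hF hat], by linarith [hF htb, hS hat]⟩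

lemma abs_sub_le_of_grid (hS : Monotone S) (hF : Monotone F) (hS0 : ∀ t, 0 ≤ S t)
    (hS1 : ∀ t, S t ≤ 1) (hF0 : ∀ t, 0 ≤ F t) (hF1 : ∀ t, F t ≤ 1) {y : ℕ → ℝ} {m : ℕ} {c δ : ℝ}
    (hbot : F (y 0) ≤ δ) (htop : 1 - δ ≤ F (y m)) (hstep : ∀ j < m, F (y (j + 1)) ≤ F (y j) + δ)
    (hclose : ∀ j ≤ m, |S (y j) - F (y j)| ≤ c) (t : ℝ) : |S t - F t| ≤ c + δ := by
  have hc : 0 ≤ c := (abs_nonneg _).trans (hclose 0 m.zero_le)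
  have hclose' := fun j hj => abs_sub_le_iff.1 (hclose j hj)
  by_cases h0 : y 0 ≤ t
  · set J := Nat.findGreatest (fun j => y j ≤ t) m
    have hJm : J ≤ m := Nat.findGreatest_le m
    have hyJ : y J ≤ t := Nat.findGreatest_spec (P := fun j => y j ≤ t) m.zero_le h0
    obtain hJ | hJ := hJm.eq_or_lt
    · have hm := hclose' m le_rfl
      rw [hJ] at hyJ
      exact abs_sub_le_of_bracket hS hF hyJ le_rfl (by linarith [hS1 t]) (by linarith [hF1 t])
    · have hty : t < y (J + 1) := not_le.1 (Nat.findGreatest_is_greatest J.lt_succ_self hJ)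
      have hJ₀ := hclose' J hJm
      have hJ₁ := hclose' (J + 1) hJ
      exact abs_sub_le_of_bracket hS hF hyJ hty.le (by linarith [hstep J hJ])
        (by linarith [hstep J hJ])
  · have h₀ := hclose' 0 m.zero_le
    exact abs_sub_le_of_bracket hS hF le_rfl (not_le.1 h0).le (by linarith [hF0 t])
      (by linarith [hS0 t])

theorem tendstoUniformly_of_tendsto_at_quantiles {ι : Type*} {l : Filter ι} {E : ι → ℝ → ℝ}
    (hE : ∀ n, Monotone (E n)) (hE0 : ∀ n t, 0 ≤ E n t) (hE1 : ∀ n t, E n t ≤ 1)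
    (hF : Monotone F) (hF0 : ∀ t, 0 ≤ F t) (hF1 : ∀ t, F t ≤ 1)
    (hq : ∀ q : ℚ, (q : ℝ) ∈ Ioo 0 1 → ∃ t, F t = q ∧ Tendsto (E · t) l (𝓝 q)) :
    TendstoUniformly E F l := by
  choose! x hxF hxE using hq
  rw [Metric.tendstoUniformly_iff]
  intro ε hε
  obtain ⟨m, hm⟩ := exists_nat_one_div_lt (half_pos hε)
  set q : ℕ → ℚ := fun j => (j + 1) / (m + 2)
  have hq01 : ∀ j ≤ m, (q j : ℝ) ∈ Ioo 0 1 := fun j hj => by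
    simp only [q]; push_cast
    exact ⟨by positivity, (div_lt_one (by positivity)).2 (by norm_cast; omega)⟩
  have hFq : ∀ j ≤ m, F (x (q j)) = (j + 1) / (m + 2) := fun j hj => by
    rw [hxF _ (hq01 j hj)]; push_cast [q]; ring
  have hclose : ∀ᶠ n in l, ∀ j ≤ m, |E n (x (q j)) - F (x (q j))| ≤ ε / 2 := by
    refine (Set.finite_le_nat m).eventually_all.2 fun j hj => ?_
    have := (hxE _ (hq01 j hj)).sub_const (q j : ℝ)
    rw [sub_self, ← hxF _ (hq01 j hj)] at this
    exact (this.abs.eventually (ge_mem_nhds (by rw [abs_zero]; linarith))).mono fun n hn => hn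
  filter_upwards [hclose] with n hn t
  have hgrid := abs_sub_le_of_grid (hE n) hF (hE0 n) (hE1 n) hF0 hF1 (y := fun j => x (q j))
    (δ := 1 / (m + 2)) (by rw [hFq 0 m.zero_le]; simp)
    (by rw [hFq m le_rfl, one_sub_div (by positivity)]; apply le_of_eq; ring)
    (fun j hj => by rw [hFq j hj.le, hFq (j + 1) hj]; push_cast; apply le_of_eq; ring) hn t
  have : (1 : ℝ) / (m + 2) < ε / 2 := lt_of_le_of_lt (by gcongr; linarith) hm
  rw [dist_comm, Real.dist_eq]
  linarith

lemma TendstoUniformly.tendsto_iSup_abs_sub {ι α : Type*} [Nonempty α] {l : Filter ι}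
    {E : ι → α → ℝ} {G : α → ℝ} (h : TendstoUniformly E G l) :
    Tendsto (fun n => ⨆ t, |E n t - G t|) l (𝓝 0) := by
  rw [Metric.tendsto_nhds]
  intro ε hε
  filter_upwards [Metric.tendstoUniformly_iff.1 h (ε / 2) (half_pos hε)] with n hn
  have hle : ⨆ t, |E n t - G t| ≤ ε / 2 :=
    ciSup_le fun t => by rw [abs_sub_comm, ← Real.dist_eq]; exact (hn t).le
  rw [Real.dist_0_eq_abs, abs_of_nonneg (Real.iSup_nonneg fun t => abs_nonneg _)]
  linarith

end GlivenkoCantelli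

noncomputable section

def jointLaw (f : ℝ → ℝ → ℝ) : Measure (ℝ × ℝ) :=
  volume.withDensity fun p => ENNReal.ofReal (f p.1 p.2)

def truncatedLaw (f : ℝ → ℝ → ℝ) : Measure (ℝ × ℝ) :=
  volume.withDensity fun p => ENNReal.ofReal (if p.1 < p.2 then 2 * f p.1 p.2 else 0)

def numCoordsLe (t : ℝ) (p : ℝ × ℝ) : ℝ :=
  (if p.1 ≤ t then 1 else 0) + if p.2 ≤ t then 1 else 0

def pooledECDF (z : ℕ → ℝ × ℝ) (n : ℕ) (t : ℝ) : ℝ :=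
  (1 / (2 * (n : ℝ))) * ((∑ i ∈ Finset.range n, if (z i).1 ≤ t then (1 : ℝ) else 0)
    + ∑ i ∈ Finset.range n, if (z i).2 ≤ t then (1 : ℝ) else 0)

end

lemma measurable_numCoordsLe (t : ℝ) : Measurable (numCoordsLe t) :=
  (Measurable.ite (measurableSet_le measurable_fst measurable_const) measurable_const
    measurable_const).add
  (Measurable.ite (measurableSet_le measurable_snd measurable_const) measurable_const
    measurable_const)

lemma numCoordsLe_nonneg (t : ℝ) (p : ℝ × ℝ) : 0 ≤ numCoordsLe t p := by
  unfold numCoordsLe; split_ifs <;> norm_num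

lemma numCoordsLe_le_two (t : ℝ) (p : ℝ × ℝ) : numCoordsLe t p ≤ 2 := by
  unfold numCoordsLe; split_ifs <;> norm_num

lemma monotone_numCoordsLe (p : ℝ × ℝ) : Monotone fun t => numCoordsLe t p := by
  intro s t hst
  show numCoordsLe s p ≤ numCoordsLe t p
  unfold numCoordsLe; split_ifs <;> linarith

lemma integral_numCoordsLe (ν : Measure (ℝ × ℝ)) [IsFiniteMeasure ν] (t : ℝ) :
    ∫ p, numCoordsLe t p ∂ν = ν.real {p | p.1 ≤ t} + ν.real {p | p.2 ≤ t} := by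
  have hs₁ : MeasurableSet {p : ℝ × ℝ | p.1 ≤ t} := measurableSet_le measurable_fst measurable_const
  have hs₂ : MeasurableSet {p : ℝ × ℝ | p.2 ≤ t} := measurableSet_le measurable_snd measurable_const
  rw [← integral_indicator_one hs₁, ← integral_indicator_one hs₂,
    ← integral_add ((integrable_const 1).indicator hs₁) ((integrable_const 1).indicator hs₂)]
  rfl

lemma pooledECDF_eq_sum_div (z : ℕ → ℝ × ℝ) (n : ℕ) (t : ℝ) :
    pooledECDF z n t = (∑ i ∈ Finset.range n, numCoordsLe t (z i)) / (2 * n) := by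
  rw [pooledECDF, one_div_mul_eq_div]
  simp only [numCoordsLe, Finset.sum_add_distrib]

lemma monotone_pooledECDF (z : ℕ → ℝ × ℝ) (n : ℕ) : Monotone (pooledECDF z n) := by
  intro s t hst
  simp only [pooledECDF_eq_sum_div]
  gcongr with i
  exact monotone_numCoordsLe _ hst

lemma pooledECDF_nonneg (z : ℕ → ℝ × ℝ) (n : ℕ) (t : ℝ) : 0 ≤ pooledECDF z n t := by
  rw [pooledECDF_eq_sum_div]
  exact div_nonneg (Finset.sum_nonneg fun i _ => numCoordsLe_nonneg t _) (by positivity)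

lemma pooledECDF_le_one (z : ℕ → ℝ × ℝ) (n : ℕ) (t : ℝ) : pooledECDF z n t ≤ 1 := by
  rw [pooledECDF_eq_sum_div]
  refine div_le_one_of_le₀ ?_ (by positivity)
  calc ∑ i ∈ Finset.range n, numCoordsLe t (z i) ≤ ∑ _i ∈ Finset.range n, (2 : ℝ) :=
        Finset.sum_le_sum fun i _ => numCoordsLe_le_two t _
    _ = 2 * n := by simp [mul_comm]

section Laws

variable {f : ℝ → ℝ → ℝ}

theorem truncatedLaw_add_map_swap (hf : Measurable (Function.uncurry f))
    (hsymm : ∀ x y, f x y = f y x) :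
    truncatedLaw f + (truncatedLaw f).map Prod.swap = (2 : ENNReal) • jointLaw f := by
  have hw : Measurable fun p : ℝ × ℝ => ENNReal.ofReal (if p.1 < p.2 then 2 * f p.1 p.2 else 0) :=
    (Measurable.ite (measurableSet_lt measurable_fst measurable_snd) (hf.const_mul 2)
      measurable_const).ennreal_ofReal
  have hf' : Measurable fun p : ℝ × ℝ => ENNReal.ofReal (f p.1 p.2) := hf.ennreal_ofReal
  rw [truncatedLaw, jointLaw, Measure.volume_eq_prod, map_swap_prod_withDensity,
    ← withDensity_add_left hw, ← withDensity_smul _ hf']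
  refine withDensity_congr_ae (ae_prod_fst_ne_snd.mono fun p hp => ?_)
  rcases hp.lt_or_gt with h | h
  · simp [h, h.not_gt, ENNReal.ofReal_mul]
  · simp [h, h.not_gt, ENNReal.ofReal_mul, hsymm p.1 p.2]

theorem integral_numCoordsLe_truncatedLaw (hf : Measurable (Function.uncurry f))
    (hsymm : ∀ x y, f x y = f y x) [IsFiniteMeasure (truncatedLaw f)] (t : ℝ) :
    ∫ p, numCoordsLe t p ∂truncatedLaw f = 2 * (jointLaw f).real {p | p.1 ≤ t} := by
  have hS : MeasurableSet {p : ℝ × ℝ | p.1 ≤ t} := measurableSet_le measurable_fst measurable_const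
  rw [integral_numCoordsLe, ← ENNReal.toReal_ofNat, ← measureReal_ennreal_smul_apply,
    ← truncatedLaw_add_map_swap hf hsymm, measureReal_add_apply,
    map_measureReal_apply measurable_swap hS]
  rfl

lemma isProbabilityMeasure_jointLaw (hf_nn : ∀ x y, 0 ≤ f x y)
    (hf_int : Integrable (fun p : ℝ × ℝ => f p.1 p.2)) (hf_one : ∫ p : ℝ × ℝ, f p.1 p.2 = 1) :
    IsProbabilityMeasure (jointLaw f) := by
  constructor
  rw [jointLaw, withDensity_apply _ MeasurableSet.univ, Measure.restrict_univ,
    ← ofReal_integral_eq_lintegral_ofReal hf_int (ae_of_all _ fun p => hf_nn p.1 p.2), hf_one,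
    ENNReal.ofReal_one]

lemma jointLaw_real_fst_le (hf : Measurable (Function.uncurry f)) (hf_nn : ∀ x y, 0 ≤ f x y)
    (t : ℝ) : (jointLaw f).real {p | p.1 ≤ t} = ∫ p : ℝ × ℝ, if p.1 ≤ t then f p.1 p.2 else 0 := by
  have hf' : Measurable fun p : ℝ × ℝ => ENNReal.ofReal (f p.1 p.2) := hf.ennreal_ofReal
  rw [← integral_indicator_one (measurableSet_le measurable_fst measurable_const), jointLaw,
    integral_withDensity_eq_integral_toReal_smul hf']
  · congr 1 with p
    by_cases h : p.1 ≤ t <;> simp [h, hf_nn p.1 p.2]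
  · exact ae_of_all _ fun p => ENNReal.ofReal_lt_top

end Laws

theorem ae_tendsto_pooledECDF {Ω : Type*} [MeasurableSpace Ω] {μ : Measure Ω}
    [IsProbabilityMeasure μ] {f : ℝ → ℝ → ℝ} (hf : Measurable (Function.uncurry f))
    (hsymm : ∀ x y, f x y = f y x) {Z : ℕ → Ω → ℝ × ℝ} (hZ : ∀ i, Measurable (Z i))
    (hindep : iIndepFun Z μ) (hlaw : ∀ i, μ.map (Z i) = truncatedLaw f) (t : ℝ) :
    ∀ᵐ ω ∂μ, Tendsto (fun n => pooledECDF (Z · ω) n t) atTop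
      (𝓝 ((jointLaw f).real {p | p.1 ≤ t})) := by
  have : IsProbabilityMeasure (truncatedLaw f) :=
    hlaw 0 ▸ Measure.isProbabilityMeasure_map (hZ 0).aemeasurable
  have hint : Integrable (numCoordsLe t) (truncatedLaw f) :=
    (integrable_const 2).mono' (measurable_numCoordsLe t).aestronglyMeasurable
      (ae_of_all _ fun p => by
        rw [Real.norm_of_nonneg (numCoordsLe_nonneg t p)]; exact numCoordsLe_le_two t p)
  filter_upwards [ae_tendsto_average_comp hZ hindep hlaw (measurable_numCoordsLe t) hint]
    with ω hω
  rw [integral_numCoordsLe_truncatedLaw hf hsymm] at hω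
  have h := hω.div_const 2
  rw [mul_div_cancel_left₀ _ two_ne_zero] at h
  refine h.congr fun n => ?_
  rw [pooledECDF_eq_sum_div, div_div, mul_comm]

/-- Under the truncation model with an exchangeable continuous joint density `f`,
for i.i.d. pairs `Z i` drawn from the biased density `2·1{x<y}·f(x,y)`, the estimator
`F̂_n(t) = (1/(2n)) [∑_{i<n} 1{X_i ≤ t} + ∑_{i<n} 1{Y_i ≤ t}]` converges almost surely,
uniformly in `t`, to the common unbiased marginal CDF `F_X = F_Y`. -/
theorem exchangeable_truncation_average_ecdf_glivenko_cantelli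
    {Ω : Type*} [MeasurableSpace Ω] (μ : Measure Ω) [IsProbabilityMeasure μ]
    (f : ℝ → ℝ → ℝ) (hf_meas : Measurable (Function.uncurry f))
    (hf_nn : ∀ x y, 0 ≤ f x y) (hf_symm : ∀ x y, f x y = f y x)
    (hf_int : Integrable (fun p : ℝ × ℝ => f p.1 p.2))
    (hf_one : (∫ p : ℝ × ℝ, f p.1 p.2) = 1)
    (Z : ℕ → Ω → ℝ × ℝ) (hZmeas : ∀ i, Measurable (Z i))
    (hindep : iIndepFun Z μ)
    (hlaw : ∀ i, μ.map (Z i) = (volume : Measure (ℝ × ℝ)).withDensity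
      (fun p => ENNReal.ofReal (if p.1 < p.2 then 2 * f p.1 p.2 else 0)))
    (F : ℝ → ℝ) (hF : ∀ t, F t = ∫ p : ℝ × ℝ, (if p.1 ≤ t then f p.1 p.2 else 0)) :
    ∀ᵐ ω ∂μ, Tendsto (fun n : ℕ =>
        ⨆ t : ℝ, |(1 / (2 * (n : ℝ))) *
            ((∑ i ∈ Finset.range n, if (Z i ω).1 ≤ t then (1 : ℝ) else 0)
              + ∑ i ∈ Finset.range n, if (Z i ω).2 ≤ t then (1 : ℝ) else 0)
          - F t|)
      atTop (nhds 0) := by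
  have := isProbabilityMeasure_jointLaw hf_nn hf_int hf_one
  have := Measure.isProbabilityMeasure_map (μ := jointLaw f) measurable_fst.aemeasurable
  have : NullSingletonClass ((jointLaw f).map Prod.fst) :=
    nullSingletonClass_map_fst (μ := volume) (ν := volume) (withDensity_absolutelyContinuous _ _)
  have hF_cdf : F = cdf ((jointLaw f).map Prod.fst) := funext fun t => by
    rw [hF, cdf_map_fst, jointLaw_real_fst_le hf_meas hf_nn]
  have hquantile : ∀ q : ℚ, (q : ℝ) ∈ Ioo 0 1 → ∃ t, F t = q := fun q hq =>
    hF_cdf ▸ exists_cdf_eq _ hq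
  choose! x hx using hquantile
  have hconv : ∀ᵐ ω ∂μ, ∀ q : ℚ, Tendsto (fun n => pooledECDF (Z · ω) n (x q)) atTop
      (𝓝 (F (x q))) := ae_all_iff.2 fun q => by
    simpa only [hF_cdf, cdf_map_fst] using
      ae_tendsto_pooledECDF hf_meas hf_symm hZmeas hindep hlaw (x q)
  filter_upwards [hconv] with ω hω
  exact TendstoUniformly.tendsto_iSup_abs_sub (tendstoUniformly_of_tendsto_at_quantiles
    (monotone_pooledECDF _) (pooledECDF_nonneg _) (pooledECDF_le_one _) (hF_cdf ▸ monotone_cdf _)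
    (hF_cdf ▸ cdf_nonneg _) (hF_cdf ▸ cdf_le_one _) fun q hq => ⟨x q, hx q hq, hx q hq ▸ hω q⟩)
end

section
/- Under the selection-biased independence model with k factors, the likelihood ∏_{i=1}^n [w(x_{i1},...,x_{ik}) ∏_{ℓ=1}^k F_ℓ(dx_{iℓ})] / E[w(X_1,...,X_k)] factorizes, for any fixed coordinate j, as (∏_i w(x_i)∏_{ℓ≠j}F_ℓ(dx_{iℓ}) / Ẽ(w; j, x_{ij})) × (∏_i Ẽ(w; j, x_{ij}) F_j(dx_{ij}) / E[Ẽ(w; j, X_j)]), where Ẽ(w; j, x) = E[w(X_1,...,X_k) | X_j = x] and the first factor does not depend on F_j. -/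
open MeasureTheory

/-- under the selection-biased independence model with `k` factors, the
likelihood `∏_i w(x_i) ∏_ℓ f_ℓ(x_{iℓ}) / E[w]` factorizes, for any fixed coordinate `j`, as
`(∏_i w(x_i) ∏_{ℓ≠j} f_ℓ(x_{iℓ}) / Ẽ(w; j, x_{ij})) × (∏_i Ẽ(w; j, x_{ij}) f_j(x_{ij}) / E[w])`,
where `Ẽ(w; j, x) = E[w(X_1,...,X_k) ∣ X_j = x]`, and the first factor does not depend
on `f_j`. -/
theorem selection_bias_likelihood_factorization
    {k m : ℕ} (w : (Fin k → ℝ) → ℝ) (f : Fin k → ℝ → ℝ)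
    (hfnn : ∀ ℓ t, 0 ≤ f ℓ t) (hfone : ∀ ℓ, (∫ t : ℝ, f ℓ t) = 1)
    (j : Fin k) (Et : ℝ → ℝ)
    (hEt : ∀ t, Et t = ∫ u : Fin k → ℝ,
      w (Function.update u j t) * ∏ ℓ, f ℓ (u ℓ))
    (Ew : ℝ) (hEw : Ew = ∫ u : Fin k → ℝ, w u * ∏ ℓ, f ℓ (u ℓ))
    (hEwpos : 0 < Ew)
    (x : Fin m → Fin k → ℝ) (hEtne : ∀ i, Et (x i j) ≠ 0) :
    (∏ i, (w (x i) * ∏ ℓ, f ℓ (x i ℓ)) / Ew)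
      = (∏ i, (w (x i) * ∏ ℓ ∈ Finset.univ.erase j, f ℓ (x i ℓ)) / Et (x i j))
        * (∏ i, Et (x i j) * f j (x i j) / Ew) := by
  rw [← Finset.prod_mul_distrib]
  refine Finset.prod_congr rfl fun i _ => ?_
  have h : ∏ ℓ, f ℓ (x i ℓ) = (∏ ℓ ∈ Finset.univ.erase j, f ℓ (x i ℓ)) * f j (x i j) :=
    (Finset.prod_erase_mul _ _ (Finset.mem_univ j)).symm
  rw [h]
  field_simp [hEtne i]
end
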